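/- arXiv:2403.13230 — 3 statements merged into one kernel-verified Lean document; each statement's English description precedes it below -/
import Mathlib

section
/- In the PoLoc setup, the number of challengers whose directional uncertainty in the true direction of Waldo falls below the true deviation is at most the number of Byzantine challengers: (Finset.univ.filter (fun i => R(C i, d̂ i, P̃, u) < dist P P̃)).card ≤ n − H.card. -/
open scoped Classical

/-- The plane. -/
local notation "E" => EuclideanSpace ℝ (Fin 2)

/-- Directional uncertainty `R(C, d̂, P̃, u) = s + sqrt (d̂² − d̃² + s²)`,
where `d̃ = ‖C − P̃‖` and `s = ⟪C − P̃, u⟫_ℝ`. -/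
noncomputable def dirUnc (C Pt : EuclideanSpace ℝ (Fin 2)) (dhat : ℝ)
    (u : EuclideanSpace ℝ (Fin 2)) : ℝ :=
  (inner ℝ (C - Pt) u : ℝ) +
    Real.sqrt (dhat ^ 2 - ‖C - Pt‖ ^ 2 + (inner ℝ (C - Pt) u : ℝ) ^ 2)

/- The point `P̃ + r • u` lies in the disc of radius `d̂` around `C` exactly when the quadratic
`r² - 2 s r + d̃² - d̂²` is nonpositive; its larger root is `R(C, d̂, P̃, u)`. -/

open RealInnerProductSpace in
theorem le_inner_add_sqrt_of_norm_sub_smul_le {F : Type*} [NormedAddCommGroup F]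
    [InnerProductSpace ℝ F] {x u : F} {r d : ℝ} (hu : ‖u‖ = 1) (h : ‖x - r • u‖ ≤ d) :
    r ≤ ⟪x, u⟫ + √(d ^ 2 - ‖x‖ ^ 2 + ⟪x, u⟫ ^ 2) := by
  have hexpand : ‖x - r • u‖ ^ 2 = ‖x‖ ^ 2 - 2 * r * ⟪x, u⟫ + r ^ 2 := by
    rw [norm_sub_sq_real, real_inner_smul_right, norm_smul, hu, Real.norm_eq_abs, mul_one, sq_abs]
    ring
  have hsq : ‖x - r • u‖ ^ 2 ≤ d ^ 2 := pow_le_pow_left₀ (norm_nonneg _) h 2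
  have hroot : (r - ⟪x, u⟫) ^ 2 ≤ d ^ 2 - ‖x‖ ^ 2 + ⟪x, u⟫ ^ 2 := by nlinarith
  linarith [le_abs_self (r - ⟪x, u⟫), Real.abs_le_sqrt hroot]

theorem le_dirUnc_of_dist_le {C Pt u : E} {r d : ℝ} (hu : ‖u‖ = 1)
    (h : dist C (Pt + r • u) ≤ d) : r ≤ dirUnc C Pt d u := by
  rw [dist_eq_norm, sub_add_eq_sub_sub] at h
  exact le_inner_add_sqrt_of_norm_sub_smul_le hu h

/-- The number of challengers whose directional uncertainty in the true
direction of Waldo falls below the true deviation is at most the number of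
Byzantine challengers. -/
theorem few_underestimating_challengers (n : ℕ) (C : Fin n → E) (dhat : Fin n → ℝ)
    (Pt P : E) (hne : P ≠ Pt) (H : Finset (Fin n))
    (hH : ∀ i ∈ H, dist (C i) P ≤ dhat i) :
    (Finset.univ.filter
        (fun i => dirUnc (C i) Pt (dhat i) (‖P - Pt‖⁻¹ • (P - Pt)) < dist P Pt)).card
      ≤ n - H.card := by
  have hv : P - Pt ≠ 0 := sub_ne_zero.mpr hne
  have hP : P = Pt + ‖P - Pt‖ • ‖P - Pt‖⁻¹ • (P - Pt) := by
    rw [smul_inv_smul₀ (norm_ne_zero_iff.mpr hv), add_sub_cancel]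
  have honest_not_under : ∀ i ∈ H,
      dist P Pt ≤ dirUnc (C i) Pt (dhat i) (‖P - Pt‖⁻¹ • (P - Pt)) := fun i hi => by
    rw [dist_eq_norm]
    exact le_dirUnc_of_dist_le (norm_smul_inv_norm hv) (hP ▸ hH i hi)
  have hsub : Finset.univ.filter
      (fun i => dirUnc (C i) Pt (dhat i) (‖P - Pt‖⁻¹ • (P - Pt)) < dist P Pt) ⊆ Hᶜ :=
    fun i hi => Finset.mem_compl.mpr fun hiH =>
      (Finset.mem_filter.mp hi).2.not_ge (honest_not_under i hiH)
  simpa [Finset.card_compl] using Finset.card_le_card hsub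
end

section
/- Theorem 2 (Completeness/optimality of PoLoc, achievability). Let n be a natural number, C : Fin n → E, d̂ : Fin n → ℝ and P̃ ∈ E with ‖C i − P̃‖ ≤ d̂ i for every i. Fix a unit vector u and an index i⋆ ∈ Fin n, and set ρ := R(C i⋆, d̂ i⋆, P̃, u) and P := P̃ + ρ • u. Then: (a) dist P P̃ = ρ; (b) dist (C i⋆) P = d̂ i⋆; and (c) for every j ∈ Fin n with ρ ≤ R(C j, d̂ j, P̃, u), dist (C j) P ≤ d̂ j. Hence a Waldo actually located at P is consistent with the measurements of every challenger whose directional uncertainty in direction u is at least ρ, and the uncertainty bound ρ is attained exactly. -/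
/-- The plane. -/
local notation "E" => EuclideanSpace ℝ (Fin 2)

/-!
With `v = C − P̃`, `s = ⟪v, u⟫` and `t = √(d̂² − ‖v‖² + s²)`, the squared distance from `C`
to `P̃ + ρ • u` is `(ρ − s)² + ‖v‖² − s²`, so it is at most `d̂²` exactly when `|ρ − s| ≤ t`.
The directional uncertainty `R = s + t` is the upper end of this interval, where the distance is
exactly `d̂`; the lower end `s − t` is `≤ 0` because `t ≥ |s|` as soon as `‖v‖ ≤ d̂`. Hence every
`ρ ∈ [0, R(C j, …)]` keeps challenger `j` consistent.
-/

open scoped InnerProductSpace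

theorem dist_add_smul_sq_of_norm_eq_one {F : Type*} [SeminormedAddCommGroup F]
    [InnerProductSpace ℝ F] {u : F} (hu : ‖u‖ = 1) (x p : F) (ρ : ℝ) :
    dist x (p + ρ • u) ^ 2 = (ρ - ⟪x - p, u⟫_ℝ) ^ 2 + ‖x - p‖ ^ 2 - ⟪x - p, u⟫_ℝ ^ 2 := by
  rw [dist_eq_norm, sub_add_eq_sub_sub, norm_sub_sq_real, real_inner_smul_right, norm_smul, hu,
    Real.norm_eq_abs, mul_one, sq_abs]
  ring

theorem abs_le_sqrt_sq_sub_sq_add_sq {s n d : ℝ} (hn : 0 ≤ n) (hnd : n ≤ d) :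
    |s| ≤ √(d ^ 2 - n ^ 2 + s ^ 2) :=
  Real.abs_le_sqrt (by nlinarith)

section DirUnc

variable {C Pt u : E} {d : ℝ}

theorem dirUnc_nonneg (hd : ‖C - Pt‖ ≤ d) : 0 ≤ dirUnc C Pt d u :=
  neg_le_iff_add_nonneg'.mp ((neg_le_abs _).trans (abs_le_sqrt_sq_sub_sq_add_sq (norm_nonneg _) hd))

theorem dist_add_smul_sq_sub_sq (hu : ‖u‖ = 1) (hd : ‖C - Pt‖ ≤ d) (ρ : ℝ) :
    dist C (Pt + ρ • u) ^ 2 - d ^ 2 =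
      (ρ - ⟪C - Pt, u⟫_ℝ) ^ 2 - √(d ^ 2 - ‖C - Pt‖ ^ 2 + ⟪C - Pt, u⟫_ℝ ^ 2) ^ 2 := by
  have hrad : 0 ≤ d ^ 2 - ‖C - Pt‖ ^ 2 + ⟪C - Pt, u⟫_ℝ ^ 2 := by
    nlinarith [norm_nonneg (C - Pt)]
  rw [dist_add_smul_sq_of_norm_eq_one hu, Real.sq_sqrt hrad]
  ring

theorem dist_add_dirUnc_smul (hu : ‖u‖ = 1) (hd : ‖C - Pt‖ ≤ d) :
    dist C (Pt + dirUnc C Pt d u • u) = d := by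
  have key := dist_add_smul_sq_sub_sq hu hd (dirUnc C Pt d u)
  have hR : dirUnc C Pt d u - ⟪C - Pt, u⟫_ℝ = √(d ^ 2 - ‖C - Pt‖ ^ 2 + ⟪C - Pt, u⟫_ℝ ^ 2) :=
    add_sub_cancel_left _ _
  rw [hR, sub_self, sub_eq_zero] at key
  exact (sq_eq_sq₀ dist_nonneg ((norm_nonneg _).trans hd)).1 key

theorem dist_add_smul_le_of_le_dirUnc (hu : ‖u‖ = 1) (hd : ‖C - Pt‖ ≤ d) {ρ : ℝ} (hρ₀ : 0 ≤ ρ)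
    (hρ : ρ ≤ dirUnc C Pt d u) : dist C (Pt + ρ • u) ≤ d := by
  have hs := abs_le_sqrt_sq_sub_sq_add_sq (s := ⟪C - Pt, u⟫_ℝ) (norm_nonneg _) hd
  have hsq : (ρ - ⟪C - Pt, u⟫_ℝ) ^ 2 ≤ √(d ^ 2 - ‖C - Pt‖ ^ 2 + ⟪C - Pt, u⟫_ℝ ^ 2) ^ 2 := by
    refine sq_le_sq' ?_ ?_
    · linarith [le_abs_self ⟪C - Pt, u⟫_ℝ]
    · rw [dirUnc] at hρ
      linarith
  refine (sq_le_sq₀ dist_nonneg ((norm_nonneg _).trans hd)).1 ?_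
  linarith [dist_add_smul_sq_sub_sq hu hd ρ]

end DirUnc

/-- Theorem 2 (Completeness/optimality of PoLoc, achievability): a Waldo
actually located at `P := P̃ + ρ • u`, where `ρ` is the directional uncertainty
of challenger `i⋆` in direction `u`, (a) is exactly at distance `ρ` from the
claimed location, (b) is exactly at distance `d̂ i⋆` from challenger `i⋆`, and
(c) is consistent with the measurement of every challenger whose directional
uncertainty in direction `u` is at least `ρ`. -/
theorem poloc_completeness (n : ℕ) (C : Fin n → E) (dhat : Fin n → ℝ) (Pt : E)
    (h : ∀ i, ‖C i - Pt‖ ≤ dhat i) (u : E) (hu : ‖u‖ = 1) (istar : Fin n) :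
    let ρ : ℝ := dirUnc (C istar) Pt (dhat istar) u
    let P : E := Pt + ρ • u
    dist P Pt = ρ ∧ dist (C istar) P = dhat istar ∧
      ∀ j : Fin n, ρ ≤ dirUnc (C j) Pt (dhat j) u → dist (C j) P ≤ dhat j := by
  intro ρ P
  have hρ₀ : 0 ≤ ρ := dirUnc_nonneg (h istar)
  refine ⟨?_, dist_add_dirUnc_smul hu (h istar), fun j hj ↦
    dist_add_smul_le_of_le_dirUnc hu (h j) hρ₀ hj⟩
  rw [dist_self_add_left, norm_smul, hu, mul_one, Real.norm_of_nonneg hρ₀]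
end

section
/- Let n be a natural number, C : Fin n → E, d̂ : Fin n → ℝ and P̃ ∈ E with ‖C i − P̃‖ ≤ d̂ i for every i. For every unit vector u and every real r ≥ 0, the set of challengers whose disk covers the point P̃ + r • u equals the set of challengers whose directional uncertainty in direction u is at least r: {i ∈ Fin n | dist (P̃ + r • u) (C i) ≤ d̂ i} = {i ∈ Fin n | r ≤ R(C i, d̂ i, P̃, u)}. In particular, the point at distance r in direction u is covered by at least (n − f) of the disks if and only if r is at most the (f+1)-th smallest of the values R(C i, d̂ i, P̃, u). -/
/-- The plane. -/
local notation "E" => EuclideanSpace ℝ (Fin 2)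

/-! Moving from the centre-relative point `v` along the unit vector `u`, the squared distance
`‖v - r • u‖² = (r - s)² - (d² - ‖v‖² + s²) + d²` is a quadratic in `r` whose smaller root
`s - √(d² - ‖v‖² + s²)` is `≤ 0` as soon as `‖v‖ ≤ d`; so for `r ≥ 0` the disk condition
reduces to `r` being below the larger root, which is the directional uncertainty. -/

theorem Real.sub_sq_le_iff_le_add_sqrt {r s A : ℝ} (hr : 0 ≤ r) (hsA : s ^ 2 ≤ A) :
    (r - s) ^ 2 ≤ A ↔ r ≤ s + √A := by
  have hs : s ≤ √A := Real.le_sqrt_of_sq_le hsA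
  rw [Real.sq_le ((sq_nonneg s).trans hsA)]
  constructor
  · rintro ⟨-, h⟩
    linarith
  · intro h
    constructor <;> linarith

theorem norm_sub_smul_sq_of_norm_eq_one {V : Type*} [NormedAddCommGroup V]
    [InnerProductSpace ℝ V] (v : V) {u : V} (hu : ‖u‖ = 1) (r : ℝ) :
    ‖v - r • u‖ ^ 2 = ‖v‖ ^ 2 - 2 * r * inner ℝ v u + r ^ 2 := by
  rw [norm_sub_sq_real, real_inner_smul_right, norm_smul, hu, mul_one, Real.norm_eq_abs, sq_abs]
  ring

theorem norm_sub_smul_le_iff_le_inner_add_sqrt {V : Type*} [NormedAddCommGroup V]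
    [InnerProductSpace ℝ V] {v u : V} {d r : ℝ} (hv : ‖v‖ ≤ d) (hu : ‖u‖ = 1) (hr : 0 ≤ r) :
    ‖v - r • u‖ ≤ d ↔ r ≤ inner ℝ v u + √(d ^ 2 - ‖v‖ ^ 2 + inner ℝ v u ^ 2) := by
  set s := inner ℝ v u
  have hd : 0 ≤ d := (norm_nonneg v).trans hv
  have hs : s ^ 2 ≤ ‖v‖ ^ 2 := by
    simpa [hu] using sq_le_sq.mpr ((abs_real_inner_le_norm v u).trans (le_abs_self _))
  have hvd : ‖v‖ ^ 2 ≤ d ^ 2 := pow_le_pow_left₀ (norm_nonneg v) hv 2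
  rw [← Real.sub_sq_le_iff_le_add_sqrt hr (by linarith), ← sq_le_sq₀ (norm_nonneg _) hd,
    norm_sub_smul_sq_of_norm_eq_one v hu r]
  constructor <;> intro h <;> linarith

/-- The set of challengers whose disk covers the point `P̃ + r • u` equals the
set of challengers whose directional uncertainty in direction `u` is at least
`r`. -/
theorem covering_set_eq (n : ℕ) (C : Fin n → E) (dhat : Fin n → ℝ) (Pt : E)
    (h : ∀ i, ‖C i - Pt‖ ≤ dhat i) (u : E) (hu : ‖u‖ = 1) (r : ℝ) (hr : 0 ≤ r) :
    {i : Fin n | dist (Pt + r • u) (C i) ≤ dhat i} =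
      {i : Fin n | r ≤ dirUnc (C i) Pt (dhat i) u} := by
  ext i
  rw [Set.mem_ofPred_eq, Set.mem_ofPred_eq, dist_comm, dist_eq_norm, ← sub_sub, dirUnc]
  exact norm_sub_smul_le_iff_le_inner_add_sqrt (h i) hu hr
end
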